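/- arXiv:2406.02526 — 4 statements merged into one kernel-verified Lean document; each statement's English description precedes it below -/
import Mathlib

section
/- Let X, X', Y, Y' be topological spaces and let k : X' → X and h : Y → Y' be continuous maps. If continuous maps a, b : X → Y satisfy a ∼_r b, then a∘k ∼_r b∘k (as maps X' → Y) and h∘a ∼_r h∘b (as maps X → Y'). -/
/-- The restriction homomorphism `⟨Y^X⟩ → ⟨Y^T⟩`, `⟨a⟩ ↦ ⟨a|_T⟩`, on free abelian
groups on continuous maps. -/
noncomputable def restrictEns {X Y : Type*} [TopologicalSpace X] [TopologicalSpace Y]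
    (T : Set X) : (C(X, Y) →₀ ℤ) →+ (C(T, Y) →₀ ℤ) :=
  Finsupp.mapDomain.addMonoidHom fun a => a.restrict T

/-- `A ∈ ⟨Y^X⟩^{(s)}`: the restriction of `A` to every finite subset with fewer than `s`
points vanishes.  (So `⟨Y^X⟩^{(r+1)}` is `inFilt (r+1)`.) -/
def inFilt {X Y : Type*} [TopologicalSpace X] [TopologicalSpace Y]
    (s : ℕ) (A : C(X, Y) →₀ ℤ) : Prop :=
  ∀ T : Set X, T.Finite → T.ncard < s → restrictEns T A = 0

/-- `a ∼_r b` : some integral combination `A` of maps homotopic to `a`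
satisfies `A ≡_r ⟨b⟩`, i.e. `A - ⟨b⟩ ∈ ⟨Y^X⟩^{(r+1)}`. -/
def similar {X Y : Type*} [TopologicalSpace X] [TopologicalSpace Y]
    (r : ℕ) (a b : C(X, Y)) : Prop :=
  ∃ A : C(X, Y) →₀ ℤ, (∀ c ∈ A.support, c.Homotopic a) ∧
    inFilt (r + 1) (A - Finsupp.single b 1)

/-! Pushing an integral combination of maps forward along `c ↦ c ∘ k` or `c ↦ h ∘ c`
preserves homotopy to `a` and sends `⟨b⟩` to `⟨b ∘ k⟩` resp. `⟨h ∘ b⟩`. It also preserves the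
filtration: restricting a pushforward to a finite `T` factors through restriction to `T`
(for `h ∘ ·`) or to `k '' T`, which has at most as many points as `T` (for `· ∘ k`). -/

open Set

section
variable {X X' Y Y' : Type*} [TopologicalSpace X] [TopologicalSpace X']
  [TopologicalSpace Y] [TopologicalSpace Y']

lemma restrictEns_mapDomain_comp_right (k : C(X', X)) (T : Set X') (B : C(X, Y) →₀ ℤ) :
    restrictEns T (B.mapDomain (·.comp k)) =
      (restrictEns (k '' T) B).mapDomain
        (·.comp ⟨(mapsTo_image k T).restrict, k.continuous.restrict (mapsTo_image k T)⟩) := by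
  simp only [restrictEns, Finsupp.mapDomain.addMonoidHom_apply, ← Finsupp.mapDomain_comp]
  rfl

lemma restrictEns_mapDomain_comp_left (h : C(Y, Y')) (T : Set X) (B : C(X, Y) →₀ ℤ) :
    restrictEns T (B.mapDomain h.comp) = (restrictEns T B).mapDomain h.comp := by
  simp only [restrictEns, Finsupp.mapDomain.addMonoidHom_apply, ← Finsupp.mapDomain_comp]
  rfl

lemma inFilt.mapDomain_comp_right {s : ℕ} {B : C(X, Y) →₀ ℤ} (hB : inFilt s B) (k : C(X', X)) :
    inFilt s (B.mapDomain (·.comp k)) := fun T hT hTs => by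
  rw [restrictEns_mapDomain_comp_right,
    hB _ (hT.image k) ((ncard_image_le hT).trans_lt hTs), Finsupp.mapDomain_zero]

lemma inFilt.mapDomain_comp_left {s : ℕ} {B : C(X, Y) →₀ ℤ} (hB : inFilt s B) (h : C(Y, Y')) :
    inFilt s (B.mapDomain h.comp) := fun T hT hTs => by
  rw [restrictEns_mapDomain_comp_left, hB T hT hTs, Finsupp.mapDomain_zero]

lemma similar.map {r : ℕ} {a b : C(X, Y)} (hab : similar r a b) (F : C(X, Y) → C(X', Y'))
    (hF : ∀ c, c.Homotopic a → (F c).Homotopic (F a))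
    (hFilt : ∀ B, inFilt (r + 1) B → inFilt (r + 1) (B.mapDomain F)) :
    similar r (F a) (F b) := by
  classical
  obtain ⟨A, hA, hAb⟩ := hab
  refine ⟨A.mapDomain F, fun c hc => ?_, ?_⟩
  · obtain ⟨d, hd, rfl⟩ := Finset.mem_image.mp (Finsupp.mapDomain_support hc)
    exact hF d (hA d hd)
  · simpa only [Finsupp.mapDomain_sub, Finsupp.mapDomain_single] using hFilt _ hAb

lemma similar.comp_right {r : ℕ} {a b : C(X, Y)} (hab : similar r a b) (k : C(X', X)) :
    similar r (a.comp k) (b.comp k) :=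
  hab.map (·.comp k) (fun _ hc => hc.comp (.refl k)) fun _ hB => hB.mapDomain_comp_right k

lemma similar.comp_left {r : ℕ} {a b : C(X, Y)} (hab : similar r a b) (h : C(Y, Y')) :
    similar r (h.comp a) (h.comp b) :=
  hab.map h.comp (fun _ hc => (ContinuousMap.Homotopic.refl h).comp hc)
    fun _ hB => hB.mapDomain_comp_left h

end

theorem stmt1 {X X' Y Y' : Type*} [TopologicalSpace X] [TopologicalSpace X']
    [TopologicalSpace Y] [TopologicalSpace Y']
    (k : C(X', X)) (h : C(Y, Y')) (r : ℕ) (a b : C(X, Y))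
    (hab : similar r a b) :
    similar r (a.comp k) (b.comp k) ∧ similar r (h.comp a) (h.comp b) :=
  ⟨hab.comp_right k, hab.comp_left h⟩
end

section
/- Let X₁, X₂, Y be pointed topological spaces, let p, q ≥ 0, and let A = Σ_i u_i⟨a_i⟩ ∈ ⟨Y^{X₁}⟩^{(p)} and B = Σ_j v_j⟨b_j⟩ ∈ ⟨Y^{X₂}⟩^{(q)}. Then the join Σ_{i,j} u_i v_j ⟨a_i ∇ b_j⟩ lies in ⟨Y^{X₁∨X₂}⟩^{(p+q)}. -/
/-- The wedge `X₁ ∨ X₂` of two pointed spaces: the quotient of `X₁ ⊔ X₂`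
identifying the two basepoints. -/
def Wedge (X₁ X₂ : Type*) [TopologicalSpace X₁] [TopologicalSpace X₂] (p₁ : X₁) (p₂ : X₂) :=
  Quot fun a b : X₁ ⊕ X₂ => a = Sum.inl p₁ ∧ b = Sum.inr p₂

instance (X₁ X₂ : Type*) [TopologicalSpace X₁] [TopologicalSpace X₂] (p₁ : X₁) (p₂ : X₂) :
    TopologicalSpace (Wedge X₁ X₂ p₁ p₂) :=
  inferInstanceAs (TopologicalSpace (Quot _))

namespace Wedge

variable (X₁ X₂ : Type*) [TopologicalSpace X₁] [TopologicalSpace X₂] (p₁ : X₁) (p₂ : X₂)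

/-- The basepoint of the wedge. -/
def pt : Wedge X₁ X₂ p₁ p₂ := Quot.mk _ (Sum.inl p₁)

/-- The inclusion of the first summand. -/
def inl : C(X₁, Wedge X₁ X₂ p₁ p₂) :=
  ⟨fun x => Quot.mk _ (Sum.inl x), continuous_quot_mk.comp continuous_inl⟩

/-- The inclusion of the second summand. -/
def inr : C(X₂, Wedge X₁ X₂ p₁ p₂) :=
  ⟨fun x => Quot.mk _ (Sum.inr x), continuous_quot_mk.comp continuous_inr⟩

theorem inl_pt : inl X₁ X₂ p₁ p₂ p₁ = pt X₁ X₂ p₁ p₂ := rfl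

theorem inr_pt : inr X₁ X₂ p₁ p₂ p₂ = pt X₁ X₂ p₁ p₂ := (Quot.sound ⟨rfl, rfl⟩).symm

variable {X₁ X₂ p₁ p₂} {Y : Type*} [TopologicalSpace Y]

/-- `a ∇ b` : the map `X₁ ∨ X₂ → Y` restricting to `a` and `b` on the two summands. -/
def elim (a : C(X₁, Y)) (b : C(X₂, Y)) (hab : a p₁ = b p₂) : C(Wedge X₁ X₂ p₁ p₂, Y) :=
  ⟨Quot.lift (Sum.elim a b)
      (by rintro s t ⟨hs, ht⟩; subst hs; subst ht; simpa using hab),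
    continuous_quot_lift _ (a.continuous.sumElim b.continuous)⟩

end Wedge

/-- Basepoint-preserving continuous maps. -/
def PtdMap (X Y : Type*) [TopologicalSpace X] [TopologicalSpace Y] (x₀ : X) (y₀ : Y) :=
  {f : C(X, Y) // f x₀ = y₀}

/-- The restriction homomorphism `⟨Y^X⟩ → ⟨Y^T⟩` on the free abelian group on
basepoint-preserving maps, `⟨a⟩ ↦ ⟨a|_T⟩` (landing in the free abelian group on
all continuous maps `T → Y`). -/
noncomputable def restrictEnsP {X Y : Type*} [TopologicalSpace X] [TopologicalSpace Y]
    {x₀ : X} {y₀ : Y} (T : Set X) : (PtdMap X Y x₀ y₀ →₀ ℤ) →+ (C(T, Y) →₀ ℤ) :=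
  Finsupp.mapDomain.addMonoidHom fun a => a.1.restrict T

/-- `A ∈ ⟨Y^X⟩^{(s)}`: the restriction of `A` to every finite subset with fewer than `s`
points vanishes (so membership in `⟨Y^X⟩^{(s)}` means vanishing on subsets with at most
`s - 1` points, and `⟨Y^X⟩^{(0)}` is everything). -/
def inFiltP {X Y : Type*} [TopologicalSpace X] [TopologicalSpace Y] {x₀ : X} {y₀ : Y}
    (s : ℕ) (A : PtdMap X Y x₀ y₀ →₀ ℤ) : Prop :=
  ∀ T : Set X, T.Finite → T.ncard < s → restrictEnsP T A = 0

/-- `a ∇ b` for basepoint-preserving maps, as a basepoint-preserving map on the wedge. -/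
def wedgeElimP {X₁ X₂ Y : Type*} [TopologicalSpace X₁] [TopologicalSpace X₂]
    [TopologicalSpace Y] {p₁ : X₁} {p₂ : X₂} {y₀ : Y}
    (a : PtdMap X₁ Y p₁ y₀) (b : PtdMap X₂ Y p₂ y₀) :
    PtdMap (Wedge X₁ X₂ p₁ p₂) Y (Wedge.pt X₁ X₂ p₁ p₂) y₀ :=
  ⟨Wedge.elim a.1 b.1 (a.2.trans b.2.symm), a.2⟩

/-- The join `Σ_{i,j} u_i v_j ⟨a_i ∇ b_j⟩` of two ensembles
`A = Σ_i u_i ⟨a_i⟩` and `B = Σ_j v_j ⟨b_j⟩`. -/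
noncomputable def joinEns {X₁ X₂ Y : Type*} [TopologicalSpace X₁] [TopologicalSpace X₂]
    [TopologicalSpace Y] {p₁ : X₁} {p₂ : X₂} {y₀ : Y}
    (A : PtdMap X₁ Y p₁ y₀ →₀ ℤ) (B : PtdMap X₂ Y p₂ y₀ →₀ ℤ) :
    (PtdMap (Wedge X₁ X₂ p₁ p₂) Y (Wedge.pt X₁ X₂ p₁ p₂) y₀ →₀ ℤ) :=
  A.sum fun a u => B.sum fun b v => Finsupp.single (wedgeElimP a b) (u * v)


/-!
Write `T₁`, `T₂` for the points of a finite `T ⊆ X₁ ∨ X₂` lying in the two summands, off the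
basepoint. They embed disjointly into `T`, so `|T₁| + |T₂| ≤ |T| < p + q`, and hence `|T₁| < p`
or `|T₂| < q`. Since `a ∇ b` restricted to `T` only depends on `a|_{T₁}` and `b|_{T₂}`, the
restriction of the join to `T` is a bilinear expression in `A|_{T₁}` and `B|_{T₂}`, one of which
vanishes.
-/

open Function Set

theorem Finsupp.sum_eq_zero_of_mapDomain_eq_zero {α β R M : Type*} [AddCommMonoid R]
    [AddCommMonoid M] {f : α → β} {g : α → R → M} (hg : g.FactorsThrough f)
    (h_zero : ∀ a, g a 0 = 0) (h_add : ∀ a u v, g a (u + v) = g a u + g a v) {A : α →₀ R}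
    (hA : A.mapDomain f = 0) : A.sum g = 0 := by
  obtain ⟨G, hG, hG_of_not_mem⟩ : ∃ G : β → R → M,
      (∀ a, G (f a) = g a) ∧ ∀ c, (¬∃ a, f a = c) → G c = 0 :=
    ⟨extend f g 0, hg.extend_apply _, fun c hc => extend_apply' g _ c hc⟩
  calc A.sum g = A.sum fun a => G (f a) := by simp only [hG]
    _ = (A.mapDomain f).sum G := by
      refine (Finsupp.sum_mapDomain_index (fun c => ?_) fun c u v => ?_).symm
      · by_cases hc : ∃ a, f a = c
        · obtain ⟨a, rfl⟩ := hc
          rw [hG, h_zero]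
        · rw [hG_of_not_mem c hc, Pi.zero_apply]
      · by_cases hc : ∃ a, f a = c
        · obtain ⟨a, rfl⟩ := hc
          simp only [hG, h_add]
        · simp only [hG_of_not_mem c hc, Pi.zero_apply, add_zero]
    _ = 0 := by rw [hA, Finsupp.sum_zero_index]

namespace Wedge

variable {X₁ X₂ : Type*} [TopologicalSpace X₁] [TopologicalSpace X₂] {p₁ : X₁} {p₂ : X₂}

theorem inl_injective : Injective (inl X₁ X₂ p₁ p₂) := fun _ _ h =>
  congrArg (elim (.id X₁) (.const X₂ p₁) rfl) h

theorem inr_injective : Injective (inr X₁ X₂ p₁ p₂) := fun _ _ h =>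
  congrArg (elim (.const X₁ p₂) (.id X₂) rfl) h

theorem eq_of_inl_eq_inr {x : X₁} {y : X₂} (h : inl X₁ X₂ p₁ p₂ x = inr X₁ X₂ p₁ p₂ y) :
    x = p₁ :=
  congrArg (elim (.id X₁) (.const X₂ p₁) rfl) h

theorem ncard_preimage_inl_add_ncard_preimage_inr_le {T : Set (Wedge X₁ X₂ p₁ p₂)}
    (hT : T.Finite) :
    (inl X₁ X₂ p₁ p₂ ⁻¹' T \ {p₁}).ncard + (inr X₁ X₂ p₁ p₂ ⁻¹' T \ {p₂}).ncard ≤ T.ncard := by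
  set T₁ := inl X₁ X₂ p₁ p₂ ⁻¹' T \ {p₁}
  set T₂ := inr X₁ X₂ p₁ p₂ ⁻¹' T \ {p₂}
  have h₁ : inl X₁ X₂ p₁ p₂ '' T₁ ⊆ T := by rintro _ ⟨x, hx, rfl⟩; exact hx.1
  have h₂ : inr X₁ X₂ p₁ p₂ '' T₂ ⊆ T := by rintro _ ⟨y, hy, rfl⟩; exact hy.1
  have hdisj : Disjoint (inl X₁ X₂ p₁ p₂ '' T₁) (inr X₁ X₂ p₁ p₂ '' T₂) := by
    rw [disjoint_left]
    rintro _ ⟨x, hx, rfl⟩ ⟨y, -, hxy⟩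
    exact hx.2 (eq_of_inl_eq_inr hxy.symm)
  calc T₁.ncard + T₂.ncard
      = (inl X₁ X₂ p₁ p₂ '' T₁ ∪ inr X₁ X₂ p₁ p₂ '' T₂).ncard := by
        rw [ncard_union_eq hdisj (hT.subset h₁) (hT.subset h₂),
          ncard_image_of_injective _ inl_injective, ncard_image_of_injective _ inr_injective]
    _ ≤ T.ncard := ncard_le_ncard (union_subset h₁ h₂) hT

end Wedge

section Join

variable {X₁ X₂ Y : Type*} [TopologicalSpace X₁] [TopologicalSpace X₂] [TopologicalSpace Y]
  {p₁ : X₁} {p₂ : X₂} {y₀ : Y}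

theorem PtdMap.eqOn_of_eqOn_diff {X : Type*} [TopologicalSpace X] {x₀ : X}
    {a a' : PtdMap X Y x₀ y₀} {S : Set X} (h : EqOn a.1 a'.1 (S \ {x₀})) : EqOn a.1 a'.1 S :=
  fun x hx => by
    by_cases hx₀ : x = x₀
    · rw [hx₀, a.2, a'.2]
    · exact h ⟨hx, hx₀⟩

theorem restrict_wedgeElimP_eq {T : Set (Wedge X₁ X₂ p₁ p₂)} {a a' : PtdMap X₁ Y p₁ y₀}
    {b b' : PtdMap X₂ Y p₂ y₀} (ha : EqOn a.1 a'.1 (Wedge.inl X₁ X₂ p₁ p₂ ⁻¹' T))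
    (hb : EqOn b.1 b'.1 (Wedge.inr X₁ X₂ p₁ p₂ ⁻¹' T)) :
    (wedgeElimP a b).1.restrict T = (wedgeElimP a' b').1.restrict T := by
  ext ⟨t, ht⟩
  induction t using Quot.ind with
  | mk s =>
    rcases s with x | y
    · exact ha ht
    · exact hb ht

theorem restrictEnsP_joinEns (T : Set (Wedge X₁ X₂ p₁ p₂)) (A : PtdMap X₁ Y p₁ y₀ →₀ ℤ)
    (B : PtdMap X₂ Y p₂ y₀ →₀ ℤ) :
    restrictEnsP T (joinEns A B) =
      A.sum fun a u => B.sum fun b v => .single ((wedgeElimP a b).1.restrict T) (u * v) := by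
  simp only [joinEns, map_finsuppSum, restrictEnsP, Finsupp.mapDomain.addMonoidHom_apply,
    Finsupp.mapDomain_single]

theorem PtdMap.sum_eq_zero_of_restrictEnsP_eq_zero {X M : Type*} [TopologicalSpace X]
    [AddCommMonoid M] {x₀ : X} {S : Set X} {A : PtdMap X Y x₀ y₀ →₀ ℤ}
    (hA : restrictEnsP S A = 0) {g : PtdMap X Y x₀ y₀ → ℤ → M}
    (hg : ∀ a a', EqOn a.1 a'.1 S → g a = g a')
    (h_zero : ∀ a, g a 0 = 0) (h_add : ∀ a u v, g a (u + v) = g a u + g a v) : A.sum g = 0 :=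
  Finsupp.sum_eq_zero_of_mapDomain_eq_zero
    (fun a a' h => hg a a' fun x hx => DFunLike.congr_fun h ⟨x, hx⟩)
    h_zero h_add hA

theorem restrictEnsP_joinEns_eq_zero_of_left {T : Set (Wedge X₁ X₂ p₁ p₂)}
    {A : PtdMap X₁ Y p₁ y₀ →₀ ℤ} (hA : restrictEnsP (Wedge.inl X₁ X₂ p₁ p₂ ⁻¹' T \ {p₁}) A = 0)
    (B : PtdMap X₂ Y p₂ y₀ →₀ ℤ) : restrictEnsP T (joinEns A B) = 0 := by
  rw [restrictEnsP_joinEns]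
  refine PtdMap.sum_eq_zero_of_restrictEnsP_eq_zero hA (fun a a' h => ?_) (fun a => ?_) ?_
  · ext u : 1
    refine Finsupp.sum_congr fun b _ => ?_
    rw [restrict_wedgeElimP_eq (PtdMap.eqOn_of_eqOn_diff h) (eqOn_refl b.1 _)]
  · simp only [zero_mul, Finsupp.single_zero, Finsupp.sum, Finset.sum_const_zero]
  · intro a u v
    simp only [add_mul, Finsupp.single_add, Finsupp.sum_add]

theorem restrictEnsP_joinEns_eq_zero_of_right {T : Set (Wedge X₁ X₂ p₁ p₂)}
    (A : PtdMap X₁ Y p₁ y₀ →₀ ℤ) {B : PtdMap X₂ Y p₂ y₀ →₀ ℤ}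
    (hB : restrictEnsP (Wedge.inr X₁ X₂ p₁ p₂ ⁻¹' T \ {p₂}) B = 0) :
    restrictEnsP T (joinEns A B) = 0 := by
  rw [restrictEnsP_joinEns]
  refine Finset.sum_eq_zero fun a _ => ?_
  refine PtdMap.sum_eq_zero_of_restrictEnsP_eq_zero hB (fun b b' h => ?_) (fun b => ?_) ?_
  · ext v : 1
    rw [restrict_wedgeElimP_eq (eqOn_refl a.1 _) (PtdMap.eqOn_of_eqOn_diff h)]
  · simp only [mul_zero, Finsupp.single_zero]
  · intro b u v
    simp only [mul_add, Finsupp.single_add]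

end Join

theorem stmt2 {X₁ X₂ Y : Type*} [TopologicalSpace X₁] [TopologicalSpace X₂]
    [TopologicalSpace Y] (p₁ : X₁) (p₂ : X₂) (y₀ : Y) (p q : ℕ)
    (A : PtdMap X₁ Y p₁ y₀ →₀ ℤ) (B : PtdMap X₂ Y p₂ y₀ →₀ ℤ)
    (hA : inFiltP p A) (hB : inFiltP q B) :
    inFiltP (p + q) (joinEns A B) := by
  intro T hT hcard
  have hsum := Wedge.ncard_preimage_inl_add_ncard_preimage_inr_le hT
  obtain h | h : (Wedge.inl X₁ X₂ p₁ p₂ ⁻¹' T \ {p₁}).ncard < p ∨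
      (Wedge.inr X₁ X₂ p₁ p₂ ⁻¹' T \ {p₂}).ncard < q := by omega
  · exact restrictEnsP_joinEns_eq_zero_of_left
      (hA _ ((hT.preimage Wedge.inl_injective.injOn).sdiff) h) B
  · exact restrictEnsP_joinEns_eq_zero_of_right A
      (hB _ ((hT.preimage Wedge.inr_injective.injOn).sdiff) h)
end

section
/- Let n ≥ 1 and s ≥ 1, and let w ∈ A = ℚ⟨T₁,…,T_n⟩ be an element whose coefficient at every word of length less than s is zero. Then for every word m, of length z, there exists a one-variable polynomial P with rational coefficients satisfying s·deg(P) ≤ z such that for every natural number x, the coefficient of (1+w)^x at the word m equals P(x). -/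
/-!
Expanding `(1 + w) ^ x` binomially, the coefficient at `m` is `∑ₖ (x choose k) · cₖ` with
`cₖ` the coefficient of `w ^ k` at `m`. Every word in the support of `w ^ k` has length at least
`s * k`, so `cₖ = 0` once `k > |m| / s`; the sum is then a combination of the polynomials
`x choose k` with `k ≤ |m| / s`.
-/

open Finset Polynomial

namespace MonoidAlgebra

theorem coeff_one_add_pow {R M : Type*} [Semiring R] [Monoid M] (w : MonoidAlgebra R M)
    (x : ℕ) (m : M) :
    ((1 + w) ^ x).coeff m = ∑ k ∈ range (x + 1), (x.choose k : R) * (w ^ k).coeff m := by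
  rw [add_comm, (Commute.one_right w).add_pow, coeff_sum, Finsupp.finsetSum_apply]
  refine sum_congr rfl fun k _ => ?_
  rw [one_pow, mul_one, ← (Nat.cast_commute (x.choose k) (w ^ k)).eq, ← nsmul_eq_mul,
    coeff_smul_apply, nsmul_eq_mul]

variable {R α : Type*} [Semiring R]

theorem coeff_mul_eq_zero_of_length_lt {a b : ℕ} {u v : MonoidAlgebra R (FreeMonoid α)}
    (hu : ∀ m : FreeMonoid α, m.length < a → u.coeff m = 0)
    (hv : ∀ m : FreeMonoid α, m.length < b → v.coeff m = 0)
    {m : FreeMonoid α} (hm : m.length < a + b) : (u * v).coeff m = 0 := by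
  classical
  rw [coeff_mul]
  refine sum_eq_zero fun m₁ _ => sum_eq_zero fun m₂ _ => ?_
  dsimp only
  split_ifs with h
  · subst h
    rw [FreeMonoid.length_mul] at hm
    rcases lt_or_ge m₁.length a with h₁ | h₁
    · rw [hu m₁ h₁, zero_mul]
    · rw [hv m₂ (by omega), mul_zero]
  · rfl

theorem coeff_pow_eq_zero_of_length_lt {s : ℕ} {w : MonoidAlgebra R (FreeMonoid α)}
    (hw : ∀ m : FreeMonoid α, m.length < s → w.coeff m = 0) (k : ℕ) :
    ∀ m : FreeMonoid α, m.length < s * k → (w ^ k).coeff m = 0 := by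
  induction k with
  | zero => simp
  | succ k ih =>
    intro m hm
    rw [pow_succ]
    exact coeff_mul_eq_zero_of_length_lt ih hw (by rwa [Nat.mul_succ] at hm)

end MonoidAlgebra

theorem sum_range_choose_mul_eq_of_eq_zero {R : Type*} [Semiring R] {c : ℕ → R} {K : ℕ}
    (hc : ∀ k, K < k → c k = 0) (x : ℕ) :
    ∑ k ∈ range (x + 1), (x.choose k : R) * c k = ∑ k ∈ range (K + 1), (x.choose k : R) * c k := by
  have hx : ∀ k ∈ range (x + K + 1), k ∉ range (x + 1) → (x.choose k : R) * c k = 0 := by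
    intro k _ hk
    rw [Nat.choose_eq_zero_of_lt (by simp only [mem_range, not_lt] at hk; omega), Nat.cast_zero, zero_mul]
  have hK : ∀ k ∈ range (x + K + 1), k ∉ range (K + 1) → (x.choose k : R) * c k = 0 := by
    intro k _ hk
    rw [hc k (by simp only [mem_range, not_lt] at hk; omega), mul_zero]
  rw [sum_subset (range_subset_range.2 (by omega)) hx,
    sum_subset (range_subset_range.2 (by omega)) hK]

theorem exists_natDegree_le_eval_eq_sum_choose_mul {F : Type*} [Field F] [CharZero F]
    (c : ℕ → F) (K : ℕ) :
    ∃ P : F[X], P.natDegree ≤ K ∧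
      ∀ x : ℕ, P.eval (x : F) = ∑ k ∈ range (K + 1), (x.choose k : F) * c k := by
  refine ⟨∑ k ∈ range (K + 1), (c k / k.factorial) • descPochhammer F k, ?_, fun x => ?_⟩
  · refine natDegree_sum_le_of_forall_le _ _ fun k hk => ?_
    calc _ ≤ (descPochhammer F k).natDegree := natDegree_smul_le _ _
      _ = k := descPochhammer_natDegree F k
      _ ≤ K := Nat.lt_succ_iff.mp (mem_range.mp hk)
  · rw [eval_finsetSum]
    refine sum_congr rfl fun k _ => ?_
    rw [eval_smul, smul_eq_mul, Nat.cast_choose_eq_descPochhammer_div]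
    ring

theorem stmt9_general (n s : ℕ) (hs : 1 ≤ s)
    (w : MonoidAlgebra ℚ (FreeMonoid (Fin n)))
    (hw : ∀ m : FreeMonoid (Fin n), m.length < s → w.coeff m = 0) :
    ∀ m : FreeMonoid (Fin n), ∃ P : Polynomial ℚ,
      s * P.natDegree ≤ m.length ∧
        ∀ x : ℕ, ((1 + w) ^ x).coeff m = P.eval (x : ℚ) := by
  intro m
  have vanish : ∀ k, m.length / s < k → (w ^ k).coeff m = 0 := fun k hk =>
    MonoidAlgebra.coeff_pow_eq_zero_of_length_lt hw k m <| by
      rw [Nat.div_lt_iff_lt_mul (by omega)] at hk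
      rwa [mul_comm]
  obtain ⟨P, hdeg, heval⟩ :=
    exists_natDegree_le_eval_eq_sum_choose_mul (fun k => (w ^ k).coeff m) (m.length / s)
  refine ⟨P, ?_, fun x => ?_⟩
  · calc s * P.natDegree ≤ s * (m.length / s) := Nat.mul_le_mul_left s hdeg
      _ ≤ m.length := Nat.mul_div_le _ _
  · rw [MonoidAlgebra.coeff_one_add_pow, sum_range_choose_mul_eq_of_eq_zero vanish, heval]

/-- Lemma 6.2 (coefficient form): if `w` is an element of the free associative
`ℚ`-algebra `A = ℚ⟨T₁,…,T_n⟩` (the monoid algebra of the free monoid on `n` letters)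
whose coefficient at every word of length `< s` vanishes, then for each word `m` of
length `z` there is a one-variable rational polynomial `P` with `s * deg P ≤ z` whose
values give the coefficients of `(1 + w) ^ x` at `m` for all natural `x`. -/
theorem stmt9 (n s : ℕ) (hn : 1 ≤ n) (hs : 1 ≤ s)
    (w : MonoidAlgebra ℚ (FreeMonoid (Fin n)))
    (hw : ∀ m : FreeMonoid (Fin n), m.length < s → w.coeff m = 0) :
    ∀ m : FreeMonoid (Fin n), ∃ P : Polynomial ℚ,
      s * P.natDegree ≤ m.length ∧
        ∀ x : ℕ, ((1 + w) ^ x).coeff m = P.eval (x : ℚ) :=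
  stmt9_general n s hs w hw
end

section
/- Let G be a group, n ≥ 1, r ≥ 0, let I be a finite index set, u : I → ℤ, and z_i = (z_{i1},…,z_{in}) ∈ G^n for i ∈ I. Suppose that for every subset K ⊆ {1,…,n} with at most r elements and every function w : K → G, the sum of u_i over all i ∈ I such that z_{ik} = w(k) for all k ∈ K equals 0. Then the element Σ_{i∈I} u_i ⟨z_{i1}z_{i2}⋯z_{in}⟩ of the integral group ring ℤ[G] lies in I(G)^{r+1}, the (r+1)-st power of the augmentation ideal. -/
open scoped Classical

/-- The augmentation homomorphism `ℤ[G] → ℤ`, `⟨g⟩ ↦ 1`. -/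
noncomputable def augMap (G : Type*) [Group G] : MonoidAlgebra ℤ G →ₐ[ℤ] ℤ :=
  MonoidAlgebra.lift ℤ ℤ G 1

/-- The augmentation ideal `I(G) ⊆ ℤ[G]`, the kernel of the augmentation; being a
two-sided ideal, its powers (as `ℤ`-submodules of the ring `ℤ[G]`) coincide with its
powers as an ideal. -/
noncomputable def augIdeal (G : Type*) [Group G] : Submodule ℤ (MonoidAlgebra ℤ G) :=
  LinearMap.ker (augMap G).toLinearMap

/-!
Write `⟨g⟩ = 1 + (⟨g⟩ - 1)` and expand `⟨z_{i1} ⋯ z_{in}⟩ = ∏ₖ (1 + (⟨z_{ik}⟩ - 1))` in the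
noncommutative ring `ℤ[G]` as a sum, over the subwords `s` of the positions `1, …, n`, of the
ordered products `∏_{k ∈ s} (⟨z_{ik}⟩ - 1)`. A product of more than `r` elements of `I(G)` lies in
`I(G)^{r+1}`. A product over a subword with at most `r` letters depends only on the coordinates
`z_{ik}`, `k ∈ s`; grouping the indices `i` by these coordinates, each group contributes its
coefficient sum, which vanishes by hypothesis.
-/

theorem List.prod_map_one_add {R α : Type*} [Semiring R] (l : List α) (f : α → R) :
    (l.map fun a => 1 + f a).prod = (l.sublists'.map fun s => (s.map f).prod).sum := by
  induction l with
  | nil => simp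
  | cons a l ih =>
    simp only [List.map_cons, List.prod_cons, ih, List.sublists'_cons, List.map_append,
      List.sum_append, List.map_map, Function.comp_def, List.sum_map_mul_left, add_mul, one_mul]

theorem Finset.sum_list_map_comm {ι α M : Type*} [AddCommMonoid M] (t : Finset ι)
    (l : List α) (f : ι → α → M) :
    ∑ i ∈ t, (l.map (f i)).sum = (l.map fun a => ∑ i ∈ t, f i a).sum := by
  induction l with
  | nil => simp
  | cons a l ih => simp [Finset.sum_add_distrib, ih]

theorem Finset.sum_smul_eq_zero_of_sum_fiber_eq_zero {ι κ α R M : Type*} [Fintype ι]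
    [Semiring R] [AddCommMonoid M] [Module R M] (u : ι → R) (x : ι → κ → α) (K : Finset κ)
    (hK : ∀ w : κ → α, (∑ i, if ∀ k ∈ K, x i k = w k then u i else 0) = 0)
    (F : (κ → α) → M) (hF : ∀ y y', (∀ k ∈ K, y k = y' k) → F y = F y') :
    ∑ i, u i • F (x i) = 0 := by
  have hrestrict : ∀ i j, K.restrict (x i) = K.restrict (x j) ↔ ∀ k ∈ K, x i k = x j k := by
    simp [funext_iff]
  have hfiber : ∀ j ∈ univ, (0 : M) =
      ∑ i with K.restrict (x i) = K.restrict (x j), u i • F (x i) := by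
    intro j _
    calc (0 : M) = (∑ i, if ∀ k ∈ K, x i k = x j k then u i else 0) • F (x j) := by
          rw [hK, zero_smul]
      _ = ∑ i with K.restrict (x i) = K.restrict (x j), u i • F (x j) := by
          rw [← sum_filter, sum_smul]
          exact sum_congr (filter_congr fun i _ => (hrestrict i j).symm) fun _ _ => rfl
      _ = ∑ i with K.restrict (x i) = K.restrict (x j), u i • F (x i) :=
          sum_congr rfl fun i hi => by rw [hF _ _ ((hrestrict i j).1 (mem_filter.1 hi).2)]
  rw [← sum_image' (f := fun _ => 0) (g := fun i => K.restrict (x i)) _ hfiber, sum_const_zero]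

theorem AlgHom.list_prod_mem_ker_pow {R A B : Type*} [CommSemiring R] [Semiring A]
    [Semiring B] [Algebra R A] [Algebra R B] (f : A →ₐ[R] B) {l : List A}
    (hl : ∀ a ∈ l, f a = 0) {r : ℕ} (hr : r < l.length) :
    l.prod ∈ LinearMap.ker f.toLinearMap ^ (r + 1) := by
  induction r generalizing l with
  | zero =>
    obtain ⟨a, ha⟩ := List.exists_mem_of_length_pos hr
    rw [zero_add, pow_one, LinearMap.mem_ker, AlgHom.toLinearMap_apply, map_list_prod]
    exact List.prod_eq_zero (List.mem_map.2 ⟨a, ha, hl a ha⟩)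
  | succ r ih =>
    obtain _ | ⟨a, l⟩ := l
    · simp at hr
    rw [List.prod_cons, pow_succ']
    exact Submodule.mul_mem_mul (LinearMap.mem_ker.2 (hl a List.mem_cons_self))
      (ih (fun b hb => hl b (List.mem_cons_of_mem a hb)) (by simpa using hr))

section GroupRing

variable {G : Type*} [Group G]

open MonoidAlgebra

theorem of_list_prod_map_eq_sum_sublists' {α : Type*} (l : List α) (x : α → G) :
    of ℤ G (l.map x).prod =
      (l.sublists'.map fun s => (s.map fun a => of ℤ G (x a) - 1).prod).sum := by
  rw [map_list_prod, List.map_map, ← List.prod_map_one_add]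
  simp_rw [add_sub_cancel, Function.comp_def]

theorem augMap_of_sub_one (g : G) : augMap G (of ℤ G g - 1) = 0 := by
  simp [augMap]

theorem sum_smul_prod_of_sub_one_mem_augIdeal_pow {n r : ℕ} {I : Type*} [Fintype I]
    (u : I → ℤ) (z : I → Fin n → G)
    (hK : ∀ K : Finset (Fin n), K.card ≤ r → ∀ w : Fin n → G,
      (∑ i : I, if ∀ k ∈ K, z i k = w k then u i else 0) = 0)
    (s : List (Fin n)) :
    ∑ i, u i • (s.map fun k => of ℤ G (z i k) - 1).prod ∈ augIdeal G ^ (r + 1) := by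
  rcases le_or_gt s.length r with hs | hs
  · have hfiber := hK s.toFinset ((List.toFinset_card_le s).trans hs)
    -- `convert` reconciles the `Decidable` instances of the two `if`s
    rw [Finset.sum_smul_eq_zero_of_sum_fiber_eq_zero u z s.toFinset (by convert hfiber)
      (fun y => (s.map fun k => of ℤ G (y k) - 1).prod) fun y y' h => by
        rw [List.map_congr_left fun k hk => by rw [h k (List.mem_toFinset.2 hk)]]]
    exact zero_mem _
  · refine Submodule.sum_mem _ fun i _ => Submodule.smul_mem _ _ ?_
    refine (augMap G).list_prod_mem_ker_pow (fun a ha => ?_) (by simpa using hs)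
    obtain ⟨k, -, rfl⟩ := List.mem_map.1 ha
    exact augMap_of_sub_one _

end GroupRing

theorem stmt16_general {G : Type*} [Group G] (n r : ℕ)
    {I : Type*} [Fintype I] (u : I → ℤ) (z : I → Fin n → G)
    (hK : ∀ K : Finset (Fin n), K.card ≤ r → ∀ w : Fin n → G,
      (∑ i : I, if ∀ k ∈ K, z i k = w k then u i else 0) = 0) :
    (∑ i : I, u i •
        MonoidAlgebra.of ℤ G (((List.finRange n).map fun k => z i k).prod)) ∈
      augIdeal G ^ (r + 1) := by
  simp_rw [of_list_prod_map_eq_sum_sublists', List.smul_sum, List.map_map,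
    Function.comp_def, Finset.sum_list_map_comm]
  exact list_sum_mem fun _ hx => by
    obtain ⟨s, -, rfl⟩ := List.mem_map.1 hx
    exact sum_smul_prod_of_sub_one_mem_augIdeal_pow u z hK s

/-- Lemma 12.1: if `Z = Σ_i u_i ⟨z_i⟩`, `z_i ∈ G^n`, satisfies `⟨ω_K⟩(Z) = 0` for all
`K ⊆ {1,…,n}` with `|K| ≤ r` (i.e. for every such `K` and every assignment `w` the sum
of the `u_i` with `z_{ik} = w k` for `k ∈ K` vanishes), then
`⟨M⟩(Z) = Σ_i u_i ⟨z_{i1} ⋯ z_{in}⟩ ∈ I(G)^{r+1}`. -/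
theorem stmt16 {G : Type*} [Group G] (n r : ℕ) (hn : 1 ≤ n)
    {I : Type*} [Fintype I] (u : I → ℤ) (z : I → Fin n → G)
    (hK : ∀ K : Finset (Fin n), K.card ≤ r → ∀ w : Fin n → G,
      (∑ i : I, if ∀ k ∈ K, z i k = w k then u i else 0) = 0) :
    (∑ i : I, u i •
        MonoidAlgebra.of ℤ G (((List.finRange n).map fun k => z i k).prod)) ∈
      augIdeal G ^ (r + 1) :=
  stmt16_general n r u z hK
end
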